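/- arXiv:0910.5363 — 6 statements merged into one kernel-verified Lean document; each statement's English description precedes it below -/
import Mathlib

section
/- Let x ∈ L¹(Ω; X) and let (x_i)_{i∈ℕ} be strongly F-measurable functions Ω → X such that ‖x_i − x‖_X → 0 almost surely as i → ∞, and suppose there exists y ∈ L¹(Ω; ℝ) with y ≥ 0 such that ‖x_i‖_X ≤ y almost surely for all i ∈ ℕ. Then x_i ∈ L¹(Ω; X) for every i, and for any sub-σ-algebra G of F, ‖E[x_i | G] − E[x | G]‖_X → 0 almost surely as i → ∞. -/
open MeasureTheory Filter

lemma condexp_clm_aux {Ω X : Type*} {F : MeasurableSpace Ω}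
    [NormedAddCommGroup X] [NormedSpace ℝ X] [CompleteSpace X]
    {P : Measure Ω} [IsFiniteMeasure P] {G : MeasurableSpace Ω} (hG : G ≤ F)
    (φ : X →L[ℝ] ℝ) {f : Ω → X} (hf : Integrable f P) :
    (fun ω => φ ((P[f|G]) ω)) =ᵐ[P] P[fun ω => φ (f ω)|G] := by
  letI : MeasurableSpace Ω := F
  have hce : Integrable (P[f|G]) P := integrable_condExp
  have hint : Integrable (fun ω => φ ((P[f|G]) ω)) P := φ.integrable_comp hce
  have hmeas : AEStronglyMeasurable[G] (fun ω => φ ((P[f|G]) ω)) P :=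
    ⟨fun ω => φ ((P[f|G]) ω),
      φ.continuous.comp_stronglyMeasurable stronglyMeasurable_condExp, EventuallyEq.rfl⟩
  refine ae_eq_condExp_of_forall_setIntegral_eq hG (φ.integrable_comp hf)
    (fun s _ _ => hint.restrict) (fun s hs hμs => ?_) hmeas
  calc ∫ ω in s, φ ((P[f|G]) ω) ∂P
      = φ (∫ ω in s, (P[f|G]) ω ∂P) := φ.integral_comp_comm hce.restrict
    _ = φ (∫ ω in s, f ω ∂P) := by rw [setIntegral_condExp hG hf hs]
    _ = ∫ ω in s, φ (f ω) ∂P := (φ.integral_comp_comm hf.restrict).symm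

lemma norming_aux {X : Type*} [NormedAddCommGroup X] [NormedSpace ℝ X]
    (d : ℕ → X) (φ : ℕ → X →L[ℝ] ℝ)
    (hφ1 : ∀ k, ‖φ k‖ ≤ 1) (hφ2 : ∀ k, φ k (d k) = ‖d k‖)
    (v : X) (hv : v ∈ closure (Set.range d)) : ‖v‖ = ⨆ k, φ k v := by
  have hbdd : BddAbove (Set.range fun k => φ k v) := by
    refine ⟨‖v‖, ?_⟩
    rintro - ⟨k, rfl⟩
    calc φ k v ≤ ‖φ k v‖ := le_abs_self _
      _ ≤ ‖φ k‖ * ‖v‖ := (φ k).le_opNorm v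
      _ ≤ 1 * ‖v‖ := by gcongr; exact hφ1 k
      _ = ‖v‖ := one_mul _
  refine le_antisymm ?_ (ciSup_le fun k => ?_)
  · refine le_of_forall_pos_le_add fun ε hε => ?_
    obtain ⟨w, ⟨k, rfl⟩, hw⟩ := Metric.mem_closure_iff.1 hv (ε / 2) (by positivity)
    have h1 : φ k v ≥ ‖d k‖ - ε / 2 := by
      have h2 : |φ k (v - d k)| ≤ ε / 2 := by
        calc |φ k (v - d k)| ≤ ‖φ k‖ * ‖v - d k‖ := (φ k).le_opNorm _
          _ ≤ 1 * ‖v - d k‖ := by gcongr; exact hφ1 k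
          _ ≤ ε / 2 := by rw [one_mul]; rw [dist_eq_norm] at hw; exact hw.le
      have h2' := abs_le.1 h2
      have h3 : φ k v = φ k (d k) + φ k (v - d k) := by
        rw [← map_add]; congr 1; abel
      rw [h3, hφ2 k]
      linarith [h2'.1]
    have h4 : ‖d k‖ ≥ ‖v‖ - ε / 2 := by
      have := norm_sub_norm_le v (d k)
      rw [dist_eq_norm] at hw
      linarith
    calc ‖v‖ ≤ φ k v + ε := by linarith
      _ ≤ (⨆ k, φ k v) + ε := by gcongr; exact le_ciSup hbdd k
  · calc φ k v ≤ ‖φ k v‖ := le_abs_self _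
      _ ≤ ‖φ k‖ * ‖v‖ := (φ k).le_opNorm v
      _ ≤ 1 * ‖v‖ := by gcongr; exact hφ1 k
      _ = ‖v‖ := one_mul _

theorem stmt2 {Ω X : Type*} {F : MeasurableSpace Ω}
    [NormedAddCommGroup X] [NormedSpace ℝ X] [CompleteSpace X]
    (P : Measure Ω) [IsProbabilityMeasure P]
    (x : Ω → X) (hx : Integrable x P)
    (xs : ℕ → Ω → X) (hxs : ∀ i, StronglyMeasurable (xs i))
    (hconv : ∀ᵐ ω ∂P, Tendsto (fun i => ‖xs i ω - x ω‖) atTop (nhds 0))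
    (y : Ω → ℝ) (hy : Integrable y P) (hy0 : 0 ≤ y)
    (hbound : ∀ i, ∀ᵐ ω ∂P, ‖xs i ω‖ ≤ y ω)
    {G : MeasurableSpace Ω} (hG : G ≤ F) :
    (∀ i, Integrable (xs i) P) ∧
      (∀ᵐ ω ∂P, Tendsto (fun i => ‖(P[xs i|G]) ω - (P[x|G]) ω‖) atTop (nhds 0)) := by
  letI : MeasurableSpace Ω := F
  have hxsint : ∀ i, Integrable (xs i) P :=
    fun i => Integrable.mono' hy (hxs i).aestronglyMeasurable (hbound i)
  refine ⟨hxsint, ?_⟩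
  -- a strongly measurable version of x
  set x' : Ω → X := hx.1.mk x with hx'def
  have hx'sm : StronglyMeasurable x' := hx.1.stronglyMeasurable_mk
  have hxx' : x =ᵐ[P] x' := hx.1.ae_eq_mk
  -- the dominating sequence z
  set z : ℕ → Ω → ℝ := fun n ω => ⨆ j : ℕ, ‖xs (n + j) ω - x' ω‖ with hzdef
  have hzsm : ∀ n, StronglyMeasurable (z n) := by
    intro n
    refine Measurable.stronglyMeasurable (Measurable.iSup fun j => ?_)
    exact ((hxs (n + j)).sub hx'sm).norm.measurable
  have hz0 : ∀ n ω, 0 ≤ z n ω := fun n ω => Real.iSup_nonneg fun j => norm_nonneg _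
  -- the good event
  have hAE : ∀ᵐ ω ∂P, (∀ i, ‖xs i ω‖ ≤ y ω) ∧
      Tendsto (fun i => ‖xs i ω - x ω‖) atTop (nhds 0) ∧ x ω = x' ω := by
    filter_upwards [ae_all_iff.2 hbound, hconv, hxx'] with ω h1 h2 h3
    exact ⟨h1, h2, h3⟩
  -- ‖x ω‖ ≤ y ω a.e.
  have hxy : ∀ᵐ ω ∂P, ‖x ω‖ ≤ y ω := by
    filter_upwards [hAE] with ω ⟨h1, h2, _⟩
    have ht : Tendsto (fun i => ‖xs i ω - x ω‖ + y ω) atTop (nhds (0 + y ω)) :=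
      h2.add tendsto_const_nhds
    have := ge_of_tendsto ht (Eventually.of_forall fun i => by
      calc ‖x ω‖ = ‖xs i ω - (xs i ω - x ω)‖ := by congr 1; abel
        _ ≤ ‖xs i ω‖ + ‖xs i ω - x ω‖ := norm_sub_le _ _
        _ ≤ ‖xs i ω - x ω‖ + y ω := by linarith [h1 i])
    linarith
  -- pointwise facts on the good event
  have hgood : ∀ᵐ ω ∂P, (∀ n, z n ω ≤ 2 * y ω) ∧
      (∀ i, ‖xs i ω - x ω‖ ≤ z i ω) ∧
      (∀ n m, n ≤ m → z m ω ≤ z n ω) ∧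
      Tendsto (fun n => z n ω) atTop (nhds 0) := by
    filter_upwards [hAE, hxy] with ω ⟨h1, h2, h3⟩ h4
    have hub : ∀ n j, ‖xs (n + j) ω - x' ω‖ ≤ 2 * y ω := by
      intro n j
      rw [← h3]
      calc ‖xs (n + j) ω - x ω‖ ≤ ‖xs (n + j) ω‖ + ‖x ω‖ := norm_sub_le _ _
        _ ≤ 2 * y ω := by linarith [h1 (n + j)]
    have hbdd : ∀ n, BddAbove (Set.range fun j => ‖xs (n + j) ω - x' ω‖) := by
      intro n; exact ⟨2 * y ω, by rintro - ⟨j, rfl⟩; exact hub n j⟩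
    have hle2 : ∀ n, z n ω ≤ 2 * y ω := fun n => ciSup_le fun j => hub n j
    refine ⟨hle2, fun i => ?_, fun n m hnm => ?_, ?_⟩
    · have := le_ciSup (hbdd i) 0
      simpa [h3] using this
    · refine ciSup_le fun j => ?_
      have : m + j = n + (m - n + j) := by omega
      rw [this]
      exact le_ciSup (hbdd n) (m - n + j)
    · rw [Metric.tendsto_atTop]
      intro ε hε
      rw [Metric.tendsto_atTop] at h2
      obtain ⟨N, hN⟩ := h2 (ε / 2) (by positivity)
      refine ⟨N, fun n hn => ?_⟩
      have hzn : z n ω ≤ ε / 2 := by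
        refine ciSup_le fun j => ?_
        rw [← h3]
        have := hN (n + j) (le_trans hn (Nat.le_add_right n j))
        rw [Real.dist_eq, sub_zero, abs_of_nonneg (norm_nonneg _)] at this
        exact this.le
      rw [Real.dist_eq, sub_zero, abs_of_nonneg (hz0 n ω)]
      linarith
  -- integrability of z n
  have hzint : ∀ n, Integrable (z n) P := by
    intro n
    refine Integrable.mono' (hy.const_mul 2) (hzsm n).aestronglyMeasurable ?_
    filter_upwards [hgood] with ω ⟨h1, _, _, _⟩
    rw [Real.norm_eq_abs, abs_of_nonneg (hz0 n ω)]
    exact h1 n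
  -- the conditional expectations of z
  set c : ℕ → Ω → ℝ := fun n => P[z n|G] with hcdef
  have hcint : ∀ n, Integrable (c n) P := fun n => integrable_condExp
  have hc0 : ∀ᵐ ω ∂P, ∀ n, 0 ≤ c n ω := by
    refine ae_all_iff.2 fun n => condExp_nonneg ?_
    exact Eventually.of_forall fun ω => hz0 n ω
  have hcmono : ∀ᵐ ω ∂P, ∀ n m, n ≤ m → c m ω ≤ c n ω := by
    rw [ae_all_iff]
    intro n
    rw [ae_all_iff]
    intro m
    rcases le_or_gt n m with h | h
    · have := condExp_mono (m := G) (hzint m) (hzint n)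
        (by filter_upwards [hgood] with ω ⟨_, _, h3, _⟩ using h3 n m h)
      filter_upwards [this] with ω hω
      intro _
      exact hω
    · exact Eventually.of_forall fun ω hnm => absurd hnm (by omega)
  -- the limit function L
  set L : Ω → ℝ := fun ω => ⨅ n, c n ω with hLdef
  have hcsm : ∀ n, StronglyMeasurable (c n) :=
    fun n => stronglyMeasurable_condExp.mono hG
  have hLsm : StronglyMeasurable L := by
    refine Measurable.stronglyMeasurable (Measurable.iInf fun n => ?_)
    exact (hcsm n).measurable
  have hctend : ∀ᵐ ω ∂P, Tendsto (fun n => c n ω) atTop (nhds (L ω)) := by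
    filter_upwards [hc0, hcmono] with ω h0 hm
    exact tendsto_atTop_ciInf (fun n m hnm => hm n m hnm)
      ⟨0, by rintro - ⟨n, rfl⟩; exact h0 n⟩
  have hL0 : ∀ᵐ ω ∂P, 0 ≤ L ω := by
    filter_upwards [hc0] with ω h0
    exact le_ciInf fun n => h0 n
  have hLc : ∀ᵐ ω ∂P, ∀ n, L ω ≤ c n ω := by
    filter_upwards [hc0] with ω h0
    intro n
    exact ciInf_le ⟨0, by rintro - ⟨m, rfl⟩; exact h0 m⟩ n
  have hLint : Integrable L P := by
    refine Integrable.mono' (hcint 0) hLsm.aestronglyMeasurable ?_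
    filter_upwards [hL0, hLc] with ω h0 hc
    rw [Real.norm_eq_abs, abs_of_nonneg h0]
    exact hc 0
  -- ∫ z n → 0
  have hzlim : Tendsto (fun n => ∫ ω, z n ω ∂P) atTop (nhds 0) := by
    have := tendsto_integral_of_dominated_convergence (fun ω => 2 * y ω)
      (fun n => (hzsm n).aestronglyMeasurable) (hy.const_mul 2)
      (fun n => by
        filter_upwards [hgood] with ω ⟨h1, _, _, _⟩
        rw [Real.norm_eq_abs, abs_of_nonneg (hz0 n ω)]
        exact h1 n)
      (by filter_upwards [hgood] with ω ⟨_, _, _, h4⟩ using h4)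
    simpa using this
  -- ∫ L = 0, hence L = 0 a.e.
  have hLeq : L =ᵐ[P] 0 := by
    have hIle : ∀ n, ∫ ω, L ω ∂P ≤ ∫ ω, z n ω ∂P := by
      intro n
      have h1 : ∫ ω, L ω ∂P ≤ ∫ ω, c n ω ∂P :=
        integral_mono_ae hLint (hcint n) (hLc.mono fun ω h => h n)
      calc ∫ ω, L ω ∂P ≤ ∫ ω, c n ω ∂P := h1
        _ = ∫ ω, z n ω ∂P := integral_condExp hG
    have hle0 : ∫ ω, L ω ∂P ≤ 0 := ge_of_tendsto hzlim (Eventually.of_forall hIle)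
    have hge0 : 0 ≤ ∫ ω, L ω ∂P := integral_nonneg_of_ae hL0
    exact (integral_eq_zero_iff_of_nonneg_ae hL0 hLint).1 (le_antisymm hle0 hge0)
  have hczero : ∀ᵐ ω ∂P, Tendsto (fun n => c n ω) atTop (nhds 0) := by
    filter_upwards [hctend, hLeq] with ω h1 h2
    rwa [h2] at h1
  -- norming functionals
  set g : ℕ → Ω → X := fun i ω => (P[xs i|G]) ω - (P[x|G]) ω with hgdef
  have hgsm : ∀ i, StronglyMeasurable[G] (g i) :=
    fun i => stronglyMeasurable_condExp.sub stronglyMeasurable_condExp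
  have hsep : TopologicalSpace.IsSeparable (⋃ i, Set.range (g i)) :=
    TopologicalSpace.IsSeparable.iUnion fun i => ((hgsm i).mono hG).isSeparable_range
  obtain ⟨s, hs_count, hs_sub⟩ := hsep
  obtain ⟨d, hd⟩ : ∃ d : ℕ → X, insert (0 : X) s = Set.range d :=
    Set.Countable.exists_eq_range (hs_count.insert 0) (Set.insert_nonempty _ _)
  have hrange : ∀ i ω, g i ω ∈ closure (Set.range d) := by
    intro i ω
    rw [← hd]
    exact closure_mono (Set.subset_insert _ _)
      (hs_sub (Set.mem_iUnion.2 ⟨i, Set.mem_range_self ω⟩))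
  choose φ hφ1 hφ2 using fun k => exists_dual_vector'' ℝ (d k)
  have hnorm : ∀ i ω, ‖g i ω‖ = ⨆ k, φ k (g i ω) :=
    fun i ω => norming_aux d φ hφ1 (fun k => hφ2 k) (g i ω) (hrange i ω)
  -- key bound: φ k (g i ω) ≤ c i ω a.e.
  have hkey : ∀ᵐ ω ∂P, ∀ i k, φ k (g i ω) ≤ c i ω := by
    rw [ae_all_iff]
    intro i
    rw [ae_all_iff]
    intro k
    have e1 : (fun ω => φ k ((P[xs i|G]) ω)) =ᵐ[P] P[fun ω => φ k (xs i ω)|G] :=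
      condexp_clm_aux hG (φ k) (hxsint i)
    have e2 : (fun ω => φ k ((P[x|G]) ω)) =ᵐ[P] P[fun ω => φ k (x ω)|G] :=
      condexp_clm_aux hG (φ k) hx
    have e3 : P[(fun ω => φ k (xs i ω)) - fun ω => φ k (x ω)|G] =ᵐ[P]
        P[fun ω => φ k (xs i ω)|G] - P[fun ω => φ k (x ω)|G] :=
      condExp_sub ((φ k).integrable_comp (hxsint i)) ((φ k).integrable_comp hx) G
    have e4 : P[(fun ω => φ k (xs i ω)) - fun ω => φ k (x ω)|G] ≤ᵐ[P] P[z i|G] := by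
      refine condExp_mono (((φ k).integrable_comp (hxsint i)).sub
        ((φ k).integrable_comp hx)) (hzint i) ?_
      filter_upwards [hgood] with ω ⟨_, h2, _, _⟩
      show φ k (xs i ω) - φ k (x ω) ≤ z i ω
      calc φ k (xs i ω) - φ k (x ω) = φ k (xs i ω - x ω) := by rw [map_sub]
        _ ≤ ‖φ k (xs i ω - x ω)‖ := le_abs_self _
        _ ≤ ‖φ k‖ * ‖xs i ω - x ω‖ := (φ k).le_opNorm _
        _ ≤ 1 * ‖xs i ω - x ω‖ := by gcongr; exact hφ1 k
        _ = ‖xs i ω - x ω‖ := one_mul _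
        _ ≤ z i ω := h2 i
    filter_upwards [e1, e2, e3, e4] with ω he1 he2 he3 he4
    have : φ k (g i ω) = φ k ((P[xs i|G]) ω) - φ k ((P[x|G]) ω) := by
      rw [hgdef]; exact map_sub _ _ _
    rw [this, he1, he2]
    have : (P[fun ω => φ k (xs i ω)|G]) ω - (P[fun ω => φ k (x ω)|G]) ω
        = (P[fun ω => φ k (xs i ω)|G] - P[fun ω => φ k (x ω)|G]) ω := rfl
    rw [this, ← he3]
    exact he4
  -- conclusion
  filter_upwards [hkey, hczero, hc0] with ω hk hc h0
  have hb : ∀ i, ‖g i ω‖ ≤ c i ω := by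
    intro i
    rw [hnorm i ω]
    exact ciSup_le fun k => hk i k
  exact squeeze_zero (fun i => norm_nonneg _) hb hc
end

section
/- Let (S, Σ, μ) be a finite measure space with μ(S) > 0, let x ∈ L¹((S, μ); X), and let f : X → Y be a continuous convex function such that the function s ↦ f(μ(S) x(s)) belongs to L¹((S, μ); Y). Then f(∫_S x dμ) ⪯ (1/μ(S)) ∫_S f(μ(S) x(s)) dμ(s), where the integrals are Bochner integrals. -/
open MeasureTheory

theorem stmt5 {S X Y : Type*} [MeasurableSpace S]
    [NormedAddCommGroup X] [NormedSpace ℝ X] [CompleteSpace X]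
    [NormedAddCommGroup Y] [NormedSpace ℝ Y] [CompleteSpace Y]
    [PartialOrder Y] [CovariantClass Y Y (· + ·) (· ≤ ·)]
    (hsmul : ∀ (c : ℝ) (y : Y), 0 ≤ c → 0 ≤ y → 0 ≤ c • y)
    (hclosed : IsClosed {y : Y | 0 ≤ y})
    (μ : Measure S) [IsFiniteMeasure μ] (hμ : 0 < (μ Set.univ).toReal)
    (x : S → X) (hx : Integrable x μ)
    (f : X → Y) (hf : Continuous f)
    (hconv : ∀ (x₁ x₂ : X), ∀ t ∈ Set.Icc (0 : ℝ) 1,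
      f (t • x₁ + (1 - t) • x₂) ≤ t • f x₁ + (1 - t) • f x₂)
    (hfi : Integrable (fun s => f ((μ Set.univ).toReal • x s)) μ) :
    f (∫ s, x s ∂μ) ≤ ((μ Set.univ).toReal)⁻¹ • ∫ s, f ((μ Set.univ).toReal • x s) ∂μ := by
  set c : ℝ := (μ Set.univ).toReal with hc
  have hμ0 : μ Set.univ ≠ 0 := by
    intro h; rw [hc, h] at hμ; simp at hμ
  have hμtop : μ Set.univ ≠ ⊤ := measure_ne_top μ _
  set ν : Measure S := (μ Set.univ)⁻¹ • μ with hν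
  have hprob : IsProbabilityMeasure ν := by
    constructor
    simp [hν, ENNReal.inv_mul_cancel hμ0 hμtop]
  set K : Set (X × Y) := {p : X × Y | f p.1 ≤ p.2} with hK
  have hKconv : Convex ℝ K := by
    rintro ⟨p₁, y₁⟩ h₁ ⟨p₂, y₂⟩ h₂ a b ha hb hab
    simp only [hK, Set.mem_setOf_eq] at h₁ h₂ ⊢
    have hb' : b = 1 - a := by linarith
    subst hb'
    calc f (a • p₁ + (1 - a) • p₂) ≤ a • f p₁ + (1 - a) • f p₂ :=
          hconv p₁ p₂ a ⟨ha, by linarith⟩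
      _ ≤ a • y₁ + (1 - a) • y₂ := by
          apply add_le_add
          · have := hsmul a (y₁ - f p₁) ha (sub_nonneg.2 h₁)
            rwa [smul_sub, sub_nonneg] at this
          · have := hsmul (1 - a) (y₂ - f p₂) hb (sub_nonneg.2 h₂)
            rwa [smul_sub, sub_nonneg] at this
  have hKclosed : IsClosed K := by
    have : K = (fun p : X × Y => p.2 - f p.1) ⁻¹' {y : Y | 0 ≤ y} := by
      ext p; simp [hK, sub_nonneg]
    rw [this]
    exact hclosed.preimage (continuous_snd.sub (hf.comp continuous_fst))
  set g : S → X × Y := fun s => (c • x s, f (c • x s)) with hg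
  have hginte : Integrable g ν := by
    have h1 : Integrable g μ := (hx.smul c).prodMk hfi
    exact h1.smul_measure (ENNReal.inv_ne_top.2 hμ0)
  have hmem : ∫ s, g s ∂ν ∈ K :=
    hKconv.integral_mem hKclosed (Filter.Eventually.of_forall fun s => le_refl _) hginte
  have hpair : ∫ s, g s ∂ν = (∫ s, c • x s ∂ν, ∫ s, f (c • x s) ∂ν) := by
    apply integral_pair
    · exact (hx.smul c).smul_measure (ENNReal.inv_ne_top.2 hμ0)
    · exact hfi.smul_measure (ENNReal.inv_ne_top.2 hμ0)
  have hinv : ((μ Set.univ)⁻¹).toReal = c⁻¹ := by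
    rw [ENNReal.toReal_inv]
  have h1 : ∫ s, c • x s ∂ν = ∫ s, x s ∂μ := by
    rw [hν, integral_smul_measure, hinv, integral_smul, smul_smul,
      inv_mul_cancel₀ hμ.ne', one_smul]
  have h2 : ∫ s, f (c • x s) ∂ν = c⁻¹ • ∫ s, f (c • x s) ∂μ := by
    rw [hν, integral_smul_measure, hinv]
  rw [hpair, hK] at hmem
  simp only [Set.mem_setOf_eq] at hmem
  rw [h1, h2] at hmem
  exact hmem
end

section
/- Let G be a sub-σ-algebra of F, let x ∈ L¹(Ω; X) be G-strongly measurable, and let y ∈ L¹(Ω; X) be such that the Y-valued function ω ↦ x(ω)·y(ω) belongs to L¹(Ω; Y). Then E[x·y | G] = x · E[y | G] holds P-almost surely. -/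
open MeasureTheory
open scoped Topology

/-- A `Y`-valued multiplication on `X`: a symmetric bilinear map satisfying
`‖x·y‖ ≤ ‖x‖ ‖y‖`, `x·x ⪰ 0`, and `x·x = 0 ↔ x = 0`. -/
structure Multiplication (X Y : Type*) [NormedAddCommGroup X] [NormedSpace ℝ X]
    [NormedAddCommGroup Y] [NormedSpace ℝ Y] [PartialOrder Y] where
  toFun : X → X → Y
  symm : ∀ a b, toFun a b = toFun b a
  add_left : ∀ a b c, toFun (a + b) c = toFun a c + toFun b c
  smul_left : ∀ (t : ℝ) (a b : X), toFun (t • a) b = t • toFun a b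
  norm_mul_le : ∀ a b, ‖toFun a b‖ ≤ ‖a‖ * ‖b‖
  sq_nonneg : ∀ a, 0 ≤ toFun a a
  sq_eq_zero_iff : ∀ a, toFun a a = 0 ↔ a = 0

section Aux

variable {X Y : Type*} [NormedAddCommGroup X] [NormedSpace ℝ X]
  [NormedAddCommGroup Y] [NormedSpace ℝ Y] [PartialOrder Y]

/-- The multiplication as a continuous bilinear map. -/
noncomputable def Multiplication.toCLM (m : Multiplication X Y) : X →L[ℝ] X →L[ℝ] Y :=
  LinearMap.mkContinuous₂
    (LinearMap.mk₂ ℝ m.toFun m.add_left m.smul_left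
      (fun a b c => by rw [m.symm a (b + c), m.add_left, m.symm b a, m.symm c a])
      (fun t a b => by rw [m.symm, m.smul_left, m.symm])) 1
    (fun a b => by simpa using m.norm_mul_le a b)

@[simp] lemma Multiplication.toCLM_apply (m : Multiplication X Y) (a b : X) :
    m.toCLM a b = m.toFun a b := rfl

lemma Multiplication.zero_left (m : Multiplication X Y) (b : X) : m.toFun 0 b = 0 := by
  have h : m.toCLM 0 b = m.toFun 0 b := rfl
  rw [← h, map_zero m.toCLM, ContinuousLinearMap.zero_apply]

lemma Multiplication.zero_right (m : Multiplication X Y) (a : X) : m.toFun a 0 = 0 := by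
  rw [m.symm, m.zero_left]

lemma Multiplication.continuous2 (m : Multiplication X Y) :
    Continuous fun p : X × X => m.toFun p.1 p.2 := by
  have : (fun p : X × X => m.toFun p.1 p.2) = fun p : X × X => m.toCLM p.1 p.2 := rfl
  rw [this]
  exact m.toCLM.continuous₂

variable {Ω : Type*} {m0 : MeasurableSpace Ω} {μ : Measure Ω}

lemma Multiplication.aestronglyMeasurable_bilin (m : Multiplication X Y) {f g : Ω → X}
    (hf : AEStronglyMeasurable f μ) (hg : AEStronglyMeasurable g μ) :
    AEStronglyMeasurable (fun ω => m.toFun (f ω) (g ω)) μ :=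
  m.continuous2.comp_aestronglyMeasurable (hf.prodMk hg)

lemma Multiplication.stronglyMeasurable_bilin (m : Multiplication X Y) {f g : Ω → X}
    (hf : StronglyMeasurable f) (hg : StronglyMeasurable g) :
    StronglyMeasurable (fun ω => m.toFun (f ω) (g ω)) :=
  m.continuous2.comp_stronglyMeasurable (hf.prodMk hg)

lemma Multiplication.integrable_bilin_of_bound (m : Multiplication X Y) {f g : Ω → X}
    (hf : AEStronglyMeasurable f μ) (hg : Integrable g μ) (c : ℝ)
    (hbound : ∀ᵐ ω ∂μ, ‖f ω‖ ≤ c) :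
    Integrable (fun ω => m.toFun (f ω) (g ω)) μ := by
  refine Integrable.mono' (hg.norm.const_mul c)
    (m.aestronglyMeasurable_bilin hf hg.1) ?_
  filter_upwards [hbound] with ω h
  exact (m.norm_mul_le _ _).trans (mul_le_mul_of_nonneg_right h (norm_nonneg _))

end Aux

section CondexpComp

variable {Ω E F' : Type*} {m m0 : MeasurableSpace Ω} {μ : Measure Ω}
  [NormedAddCommGroup E] [NormedSpace ℝ E] [CompleteSpace E]
  [NormedAddCommGroup F'] [NormedSpace ℝ F'] [CompleteSpace F']

/-- Conditional expectation commutes with continuous linear maps. -/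
theorem condexp_clm_comp (hm : m ≤ m0) [SigmaFinite (μ.trim hm)] (T : E →L[ℝ] F')
    {g : Ω → E} (hg : Integrable g μ) :
    μ[fun ω => T (g ω)|m] =ᵐ[μ] fun ω => T ((μ[g|m]) ω) := by
  refine (ae_eq_condExp_of_forall_setIntegral_eq hm (T.integrable_comp hg)
    (fun s _ _ => (T.integrable_comp integrable_condExp).integrableOn)
    (fun s hs hμs => ?_)
    ((T.continuous.comp_stronglyMeasurable stronglyMeasurable_condExp).aestronglyMeasurable)).symm
  rw [T.integral_comp_comm integrable_condExp.integrableOn,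
    setIntegral_condExp hm hg hs, T.integral_comp_comm hg.integrableOn]

end CondexpComp

section PullOut

variable {Ω X Y : Type*} {m m0 : MeasurableSpace Ω}
  [NormedAddCommGroup X] [NormedSpace ℝ X] [CompleteSpace X]
  [NormedAddCommGroup Y] [NormedSpace ℝ Y] [CompleteSpace Y] [PartialOrder Y]
variable {μ : Measure Ω}

theorem pullout_simpleFunc (mul : Multiplication X Y) (hm : m ≤ m0) [SigmaFinite (μ.trim hm)]
    (f : @SimpleFunc Ω m X) {g : Ω → X} (hg : Integrable g μ) :
    μ[fun ω => mul.toFun (f ω) (g ω)|m] =ᵐ[μ] fun ω => mul.toFun (f ω) ((μ[g|m]) ω) := by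
  apply @SimpleFunc.induction _ _ m _
    (fun f => μ[fun ω => mul.toFun (f ω) (g ω)|m]
      =ᵐ[μ] fun ω => mul.toFun (f ω) ((μ[g|m]) ω))
    (fun c s hs => ?_) (fun g₁ g₂ _ h_eq₁ h_eq₂ => ?_) f
  · classical
    simp only [@SimpleFunc.coe_piecewise _ _ m, @SimpleFunc.coe_const _ _ m,
      @SimpleFunc.coe_zero _ _ m, Set.piecewise_eq_indicator]
    have h_eq : ∀ (h : Ω → X) (ω : Ω), mul.toFun (s.indicator (Function.const Ω c) ω) (h ω)
        = s.indicator (fun ω' => mul.toFun c (h ω')) ω := by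
      intro h ω
      by_cases hω : ω ∈ s
      · simp [hω]
      · simp [hω, mul.zero_left]
    have h_int : Integrable (fun ω => mul.toFun c (g ω)) μ := (mul.toCLM c).integrable_comp hg
    calc μ[fun ω => mul.toFun (s.indicator (Function.const Ω c) ω) (g ω)|m]
        =ᵐ[μ] μ[s.indicator (fun ω' => mul.toFun c (g ω'))|m] :=
          condExp_congr_ae (Filter.Eventually.of_forall (h_eq g))
      _ =ᵐ[μ] s.indicator (μ[fun ω' => mul.toFun c (g ω')|m]) := condExp_indicator h_int hs
      _ =ᵐ[μ] fun ω => mul.toFun (s.indicator (Function.const Ω c) ω) ((μ[g|m]) ω) := by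
          filter_upwards [condexp_clm_comp hm (mul.toCLM c) hg] with ω hω
          rw [h_eq (μ[g|m]) ω]
          by_cases hωs : ω ∈ s
          · simp only [hωs, Set.indicator_of_mem]; exact hω
          · simp only [hωs, Set.indicator_of_notMem, not_false_iff]
  · have h_int : ∀ (f' : @SimpleFunc Ω m X), Integrable (fun ω => mul.toFun (f' ω) (g ω)) μ := by
      intro f'
      obtain ⟨c, hc⟩ := @SimpleFunc.exists_forall_norm_le Ω X m _ f'
      exact mul.integrable_bilin_of_bound
        ((f'.stronglyMeasurable.mono hm).aestronglyMeasurable) hg c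
        (Filter.Eventually.of_forall hc)
    have h_add : ∀ ω, (⇑(g₁ + g₂) : Ω → X) ω = g₁ ω + g₂ ω := fun ω => by
      rw [@SimpleFunc.coe_add _ _ m _ g₁ g₂]; rfl
    calc
      μ[fun ω => mul.toFun ((g₁ + g₂) ω) (g ω)|m]
          =ᵐ[μ] μ[(fun ω => mul.toFun (g₁ ω) (g ω)) + fun ω => mul.toFun (g₂ ω) (g ω)|m] := by
        refine condExp_congr_ae (Filter.Eventually.of_forall fun ω => ?_)
        simp [h_add, mul.add_left]
      _ =ᵐ[μ] μ[fun ω => mul.toFun (g₁ ω) (g ω)|m] + μ[fun ω => mul.toFun (g₂ ω) (g ω)|m] :=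
        condExp_add (h_int g₁) (h_int g₂) m
      _ =ᵐ[μ] fun ω => mul.toFun ((g₁ + g₂) ω) ((μ[g|m]) ω) := by
        filter_upwards [h_eq₁, h_eq₂] with ω h₁ h₂
        simp [Pi.add_apply, h₁, h₂, h_add, mul.add_left]

theorem pullout_of_bound (mul : Multiplication X Y) (hm : m ≤ m0) [IsFiniteMeasure μ]
    {f g : Ω → X} (hf : StronglyMeasurable[m] f) (hg : Integrable g μ) (c : ℝ)
    (hf_bound : ∀ᵐ ω ∂μ, ‖f ω‖ ≤ c) :
    μ[fun ω => mul.toFun (f ω) (g ω)|m] =ᵐ[μ] fun ω => mul.toFun (f ω) ((μ[g|m]) ω) := by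
  let fs := hf.approxBounded c
  have hfs_tendsto : ∀ᵐ ω ∂μ, Filter.Tendsto (fs · ω) Filter.atTop (𝓝 (f ω)) :=
    hf.tendsto_approxBounded_ae hf_bound
  by_cases hμ : μ = 0
  · simp only [hμ, ae_zero]; norm_cast
  have : (ae μ).NeBot := ae_neBot.2 hμ
  have hc : 0 ≤ c := by
    rcases hf_bound.exists with ⟨_ω, hω⟩
    exact (norm_nonneg _).trans hω
  have hfs_bound : ∀ n ω, ‖fs n ω‖ ≤ c := hf.norm_approxBounded_le hc
  have hfs_meas : ∀ n, AEStronglyMeasurable (fs n : Ω → X) μ := fun n =>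
    ((SimpleFunc.stronglyMeasurable (fs n)).mono hm).aestronglyMeasurable
  have key : μ[fun ω => mul.toFun (f ω) ((μ[g|m]) ω)|m]
      = fun ω => mul.toFun (f ω) ((μ[g|m]) ω) := by
    refine condExp_of_stronglyMeasurable hm
      (mul.stronglyMeasurable_bilin hf stronglyMeasurable_condExp) ?_
    exact mul.integrable_bilin_of_bound (hf.mono hm).aestronglyMeasurable
      integrable_condExp c hf_bound
  rw [← key]
  refine tendsto_condExp_unique (fun n ω => mul.toFun (fs n ω) (g ω))
    (fun n ω => mul.toFun (fs n ω) ((μ[g|m]) ω))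
    (fun ω => mul.toFun (f ω) (g ω)) (fun ω => mul.toFun (f ω) ((μ[g|m]) ω))
    ?_ ?_ ?_ ?_ (fun ω => c * ‖g ω‖) ?_ (fun ω => c * ‖(μ[g|m]) ω‖) ?_ ?_ ?_ ?_
  · exact fun n => mul.integrable_bilin_of_bound (hfs_meas n) hg c
      (Filter.Eventually.of_forall (hfs_bound n))
  · exact fun n => mul.integrable_bilin_of_bound (hfs_meas n) integrable_condExp c
      (Filter.Eventually.of_forall (hfs_bound n))
  · filter_upwards [hfs_tendsto] with ω hω
    exact ((mul.toCLM.flip (g ω)).continuous.tendsto _).comp hω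
  · filter_upwards [hfs_tendsto] with ω hω
    exact ((mul.toCLM.flip ((μ[g|m]) ω)).continuous.tendsto _).comp hω
  · exact hg.norm.const_mul c
  · exact integrable_condExp.norm.const_mul c
  · refine fun n => Filter.Eventually.of_forall fun ω => ?_
    exact (mul.norm_mul_le _ _).trans
      (mul_le_mul_of_nonneg_right (hfs_bound n ω) (norm_nonneg _))
  · refine fun n => Filter.Eventually.of_forall fun ω => ?_
    exact (mul.norm_mul_le _ _).trans
      (mul_le_mul_of_nonneg_right (hfs_bound n ω) (norm_nonneg _))
  · intro n
    refine (pullout_simpleFunc mul hm (fs n) hg).trans ?_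
    rw [condExp_of_stronglyMeasurable hm
      (mul.stronglyMeasurable_bilin (SimpleFunc.stronglyMeasurable (fs n))
        stronglyMeasurable_condExp) ?_]
    exact mul.integrable_bilin_of_bound (hfs_meas n) integrable_condExp c
      (Filter.Eventually.of_forall (hfs_bound n))

theorem pullout (mul : Multiplication X Y) (hm : m ≤ m0) [SigmaFinite (μ.trim hm)]
    {f g : Ω → X} (hf : StronglyMeasurable[m] f)
    (hfg : Integrable (fun ω => mul.toFun (f ω) (g ω)) μ) (hg : Integrable g μ) :
    μ[fun ω => mul.toFun (f ω) (g ω)|m] =ᵐ[μ] fun ω => mul.toFun (f ω) ((μ[g|m]) ω) := by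
  obtain ⟨sets, sets_prop, h_univ⟩ := hf.exists_spanning_measurableSet_norm_le hm μ
  simp_rw [forall_and] at sets_prop
  obtain ⟨h_meas, h_finite, h_norm⟩ := sets_prop
  suffices h : ∀ n, ∀ᵐ ω ∂μ, ω ∈ sets n →
      (μ[fun ω => mul.toFun (f ω) (g ω)|m]) ω = mul.toFun (f ω) ((μ[g|m]) ω) by
    rw [← ae_all_iff] at h
    filter_upwards [h] with ω hω
    obtain ⟨i, hi⟩ : ∃ i, ω ∈ sets i := by
      have h_mem : ω ∈ ⋃ i, sets i := by rw [h_univ]; exact Set.mem_univ _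
      simpa using h_mem
    exact hω i hi
  refine fun n => ae_imp_of_ae_restrict ?_
  suffices h : (μ.restrict (sets n))[fun ω => mul.toFun (f ω) (g ω)|m]
      =ᵐ[μ.restrict (sets n)] fun ω => mul.toFun (f ω) (((μ.restrict (sets n))[g|m]) ω) by
    refine (condExp_restrict_ae_eq_restrict hm (h_meas n) hfg).symm.trans (h.trans ?_)
    filter_upwards [condExp_restrict_ae_eq_restrict hm (h_meas n) hg] with ω hω
    rw [hω]
  suffices h : (μ.restrict (sets n))[fun ω => mul.toFun ((sets n).indicator f ω) (g ω)|m]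
      =ᵐ[μ.restrict (sets n)]
      fun ω => mul.toFun ((sets n).indicator f ω) (((μ.restrict (sets n))[g|m]) ω) by
    have h_ae : ∀ᵐ ω ∂(μ.restrict (sets n)), (sets n).indicator f ω = f ω :=
      indicator_ae_eq_restrict (hm _ (h_meas n))
    refine Filter.EventuallyEq.trans ?_ (h.trans ?_)
    · refine condExp_congr_ae ?_
      filter_upwards [h_ae] with ω hω
      rw [hω]
    · filter_upwards [h_ae] with ω hω
      rw [hω]
  have : IsFiniteMeasure (μ.restrict (sets n)) := by
    constructor
    rw [Measure.restrict_apply_univ]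
    exact h_finite n
  refine pullout_of_bound mul hm (hf.indicator (h_meas n)) hg.integrableOn n ?_
  filter_upwards with ω
  by_cases hωs : ω ∈ sets n
  · simpa only [hωs, Set.indicator_of_mem] using h_norm n ω hωs
  · simp only [hωs, Set.indicator_of_notMem, not_false_iff, _root_.norm_zero, Nat.cast_nonneg]

end PullOut

theorem stmt6 {Ω X Y : Type*} {F : MeasurableSpace Ω}
    [NormedAddCommGroup X] [NormedSpace ℝ X] [CompleteSpace X]
    [NormedAddCommGroup Y] [Lattice Y] [IsOrderedAddMonoid Y] [HasSolidNorm Y]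
    [NormedSpace ℝ Y] [CompleteSpace Y]
    (m : Multiplication X Y)
    (P : Measure Ω) [IsProbabilityMeasure P]
    {G : MeasurableSpace Ω} (hG : G ≤ F)
    (x : Ω → X) (hx : Integrable x P) (hxG : StronglyMeasurable[G] x)
    (y : Ω → X) (hy : Integrable y P)
    (hxy : Integrable (fun ω => m.toFun (x ω) (y ω)) P) :
    P[fun ω => m.toFun (x ω) (y ω)|G] =ᵐ[P] fun ω => m.toFun (x ω) ((P[y|G]) ω) := by
  haveI : SigmaFinite (P.trim hG) := by
    haveI : IsFiniteMeasure (P.trim hG) := isFiniteMeasure_trim hG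
    infer_instance
  exact pullout m hG hxG hxy hy
end

section
/- Let (S, Σ, μ) be a σ-finite measure space and let x, y ∈ L²(S; X). Then ‖∫_S x·y dμ‖_Y² ≤ ‖∫_S x² dμ‖_Y · ‖∫_S y² dμ‖_Y, where the integrals are Bochner integrals in Y. -/
open MeasureTheory Filter Topology

lemma my_smul_nonneg {Y : Type*} [NormedAddCommGroup Y] [Lattice Y] [HasSolidNorm Y] [IsOrderedAddMonoid Y] [NormedSpace ℝ Y]
    {t : ℝ} (ht : 0 ≤ t) {v : Y} (hv : 0 ≤ v) : 0 ≤ t • v := by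
  have half : ∀ w : Y, 0 ≤ w → 0 ≤ (2⁻¹ : ℝ) • w := by
    intro w hw
    refine nsmul_two_semiclosed ?_
    have : (2 : ℕ) • ((2⁻¹ : ℝ) • w) = w := by
      rw [← Nat.cast_smul_eq_nsmul ℝ, smul_smul]; norm_num
    rw [this]; exact hw
  have pow2 : ∀ k : ℕ, 0 ≤ ((2⁻¹ : ℝ) ^ k) • v := by
    intro k
    induction k with
    | zero => simpa using hv
    | succ n ih =>
        have := half _ ih
        rw [smul_smul] at this
        rw [pow_succ]
        calc (0:Y) ≤ (2⁻¹ * (2⁻¹:ℝ)^n) • v := this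
        _ = ((2⁻¹:ℝ)^n * 2⁻¹) • v := by ring_nf
  have seq_nonneg : ∀ k : ℕ, 0 ≤ ((⌊t * 2 ^ k⌋₊ : ℝ) / 2 ^ k) • v := by
    intro k
    have : ((⌊t * 2 ^ k⌋₊ : ℝ) / 2 ^ k) • v = (⌊t * 2 ^ k⌋₊ : ℕ) • (((2⁻¹ : ℝ) ^ k) • v) := by
      rw [← Nat.cast_smul_eq_nsmul ℝ, smul_smul]
      congr 1
      rw [div_eq_mul_inv, inv_pow]
    rw [this]
    exact nsmul_nonneg (pow2 k) _
  have htend : Tendsto (fun k : ℕ => ((⌊t * (2:ℝ) ^ k⌋₊ : ℝ) / (2:ℝ) ^ k) • v) atTop (𝓝 (t • v)) := by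
    have h1 : Tendsto (fun k : ℕ => ((2:ℝ) ^ k)) atTop atTop :=
      tendsto_pow_atTop_atTop_of_one_lt one_lt_two
    exact ((tendsto_nat_floor_mul_div_atTop ht).comp h1).smul_const v
  exact isClosed_nonneg.mem_of_tendsto htend (Eventually.of_forall (by simpa using seq_nonneg))

lemma my_integral_nonneg {S Y : Type*} [MeasurableSpace S] [NormedAddCommGroup Y] [Lattice Y] [HasSolidNorm Y] [IsOrderedAddMonoid Y]
    [NormedSpace ℝ Y] [CompleteSpace Y] {μ : Measure S} {f : S → Y} (hf : 0 ≤ᵐ[μ] f) :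
    0 ≤ ∫ s, f s ∂μ := by
  rw [integral_eq_setToFun]
  exact setToFun_nonneg _ (fun s _ _ x hx => by
    simpa [weightedSMul_apply] using my_smul_nonneg measureReal_nonneg hx) hf

lemma my_integral_mono {S Y : Type*} [MeasurableSpace S] [NormedAddCommGroup Y] [Lattice Y] [HasSolidNorm Y] [IsOrderedAddMonoid Y]
    [NormedSpace ℝ Y] [CompleteSpace Y] {μ : Measure S} {f g : S → Y}
    (hf : Integrable f μ) (hg : Integrable g μ) (h : ∀ s, f s ≤ g s) :
    ∫ s, f s ∂μ ≤ ∫ s, g s ∂μ := by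
  rw [← sub_nonneg, ← integral_sub hg hf]
  exact my_integral_nonneg (Eventually.of_forall fun s => sub_nonneg.2 (h s))

lemma my_key {a b c : ℝ} (ha : 0 ≤ a) (hb : 0 ≤ b) (hc : 0 ≤ c)
    (h : ∀ t : ℝ, 0 < t → 2*c ≤ t*a + t⁻¹*b) : c^2 ≤ a*b := by
  rcases eq_or_lt_of_le ha with ha0 | ha
  · -- a = 0 : show c = 0
    have hc' : c ≤ 0 := by
      by_contra hcpos
      push_neg at hcpos
      have ht : (0:ℝ) < (b+1)/c := by positivity
      have h1 := h _ ht
      rw [← ha0, mul_zero, zero_add] at h1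
      have hle : ((b+1)/c)⁻¹ * b ≤ c := by
        rw [inv_div, div_mul_eq_mul_div, div_le_iff₀ (by positivity)]
        nlinarith
      nlinarith
    have : c = 0 := le_antisymm hc' hc
    nlinarith
  rcases eq_or_lt_of_le hb with hb0 | hb
  · have hc' : c ≤ 0 := by
      by_contra hcpos
      push_neg at hcpos
      have ht : (0:ℝ) < c/(a+1) := by positivity
      have h1 := h _ ht
      rw [← hb0, mul_zero, add_zero] at h1
      have hle : c/(a+1) * a ≤ c := by
        rw [div_mul_eq_mul_div, div_le_iff₀ (by positivity)]
        nlinarith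
      nlinarith
    have : c = 0 := le_antisymm hc' hc
    nlinarith
  · set t := Real.sqrt (b/a) with htdef
    have ht : 0 < t := Real.sqrt_pos.2 (by positivity)
    have hsq : t^2 = b/a := Real.sq_sqrt (by positivity)
    have hbt : t⁻¹ * b = t * a := by
      refine mul_left_cancel₀ ht.ne' ?_
      rw [← mul_assoc, mul_inv_cancel₀ ht.ne', one_mul, ← mul_assoc, ← sq, hsq]
      field_simp
    have h1 := h t ht
    rw [hbt] at h1
    have hca : c ≤ t * a := by linarith
    calc c^2 ≤ (t*a)^2 := by nlinarith
    _ = (b/a) * a^2 := by rw [mul_pow, hsq]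
    _ = a * b := by field_simp

theorem stmt8 {S X Y : Type*} [MeasurableSpace S]
    [NormedAddCommGroup X] [NormedSpace ℝ X] [CompleteSpace X]
    [NormedAddCommGroup Y] [Lattice Y] [HasSolidNorm Y] [IsOrderedAddMonoid Y]
    [NormedSpace ℝ Y] [CompleteSpace Y]
    (m : Multiplication X Y)
    (μ : Measure S) [SigmaFinite μ]
    (x y : S → X) (hx : MemLp x 2 μ) (hy : MemLp y 2 μ) :
    ‖∫ s, m.toFun (x s) (y s) ∂μ‖ ^ 2 ≤
      ‖∫ s, m.toFun (x s) (x s) ∂μ‖ * ‖∫ s, m.toFun (y s) (y s) ∂μ‖ := by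
  -- right-hand versions of bilinearity
  have add_right : ∀ a b c : X, m.toFun a (b + c) = m.toFun a b + m.toFun a c := fun a b c => by
    rw [m.symm, m.add_left, m.symm b, m.symm c]
  have smul_right : ∀ (t : ℝ) (a b : X), m.toFun a (t • b) = t • m.toFun a b := fun t a b => by
    rw [m.symm, m.smul_left, m.symm]
  -- the multiplication as a continuous bilinear map
  set L : X →ₗ[ℝ] X →ₗ[ℝ] Y := LinearMap.mk₂ ℝ m.toFun m.add_left m.smul_left
    (fun a b c => add_right a b c) (fun t a b => smul_right t a b) with hL
  set B : X →L[ℝ] X →L[ℝ] Y := LinearMap.mkContinuous₂ L 1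
    (fun a b => by rw [one_mul]; exact m.norm_mul_le a b) with hB
  have hBval : ∀ a b : X, B a b = m.toFun a b := fun a b => rfl
  -- integrability
  have hint : ∀ u v : S → X, MemLp u 2 μ → MemLp v 2 μ →
      Integrable (fun s => m.toFun (u s) (v s)) μ := by
    intro u v hu hv
    have hmeas : AEStronglyMeasurable (fun s => m.toFun (u s) (v s)) μ := by
      have hc : Continuous fun p : X × X => B p.1 p.2 := B.continuous₂
      have := hc.comp_aestronglyMeasurable
        (hu.aestronglyMeasurable.prodMk hv.aestronglyMeasurable)
      simpa [hBval] using this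
    have hprod : Integrable (fun s => ‖v s‖ * ‖u s‖) μ := by
      have h1 : MemLp ((fun s => ‖v s‖) • (fun s => ‖u s‖)) 1 μ :=
        MemLp.smul hu.norm hv.norm (hpqr := ⟨by simpa using ENNReal.inv_two_add_inv_two⟩)
      rw [memLp_one_iff_integrable] at h1
      simpa [Pi.smul_apply, smul_eq_mul, Pi.mul_def] using h1
    refine Integrable.mono' hprod hmeas (Eventually.of_forall fun s => ?_)
    calc ‖m.toFun (u s) (v s)‖ ≤ ‖u s‖ * ‖v s‖ := m.norm_mul_le _ _
    _ = ‖v s‖ * ‖u s‖ := mul_comm _ _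
  have hxy : Integrable (fun s => m.toFun (x s) (y s)) μ := hint x y hx hy
  have hxx : Integrable (fun s => m.toFun (x s) (x s)) μ := hint x x hx hx
  have hyy : Integrable (fun s => m.toFun (y s) (y s)) μ := hint y y hy hy
  set I := ∫ s, m.toFun (x s) (y s) ∂μ
  set A := ∫ s, m.toFun (x s) (x s) ∂μ
  set Bv := ∫ s, m.toFun (y s) (y s) ∂μ
  have hA0 : 0 ≤ A := my_integral_nonneg (Eventually.of_forall fun s => m.sq_nonneg _)
  have hB0 : 0 ≤ Bv := my_integral_nonneg (Eventually.of_forall fun s => m.sq_nonneg _)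
  -- pointwise expansion
  have expand : ∀ (r : ℝ), r ≠ 0 → ∀ a b : X,
      m.toFun (r • a + r⁻¹ • b) (r • a + r⁻¹ • b)
        = (r*r) • m.toFun a a + (2:ℝ) • m.toFun a b + (r⁻¹*r⁻¹) • m.toFun b b := by
    intro r hr a b
    simp only [m.add_left, add_right, m.smul_left, smul_right, smul_smul]
    rw [m.symm b a, mul_inv_cancel₀ hr, inv_mul_cancel₀ hr]
    simp only [one_smul]
    rw [two_smul ℝ (m.toFun a b)]
    abel
  have neg_right : ∀ a b : X, m.toFun a (-b) = -m.toFun a b := by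
    intro a b
    have := smul_right (-1 : ℝ) a b
    simpa using this
  have neg_neg' : ∀ b : X, m.toFun (-b) (-b) = m.toFun b b := by
    intro b
    rw [neg_right, m.symm, neg_right, m.symm, neg_neg]
  -- key inequality for each t > 0
  have main : ∀ t : ℝ, 0 < t → 2 * ‖I‖ ≤ t * ‖A‖ + t⁻¹ * ‖Bv‖ := by
    intro t ht
    set r := Real.sqrt t with hrdef
    have hr : 0 < r := Real.sqrt_pos.2 ht
    have hrr : r * r = t := Real.mul_self_sqrt ht.le
    have hrri : r⁻¹ * r⁻¹ = t⁻¹ := by rw [← mul_inv, hrr]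
    have hup : ∀ s, (2:ℝ) • m.toFun (x s) (y s)
        ≤ t • m.toFun (x s) (x s) + t⁻¹ • m.toFun (y s) (y s) := by
      intro s
      have h0 := m.sq_nonneg (r • x s + r⁻¹ • (-(y s)))
      rw [expand r hr.ne' (x s) (-(y s)), neg_right, neg_neg', hrr, hrri, smul_neg] at h0
      have heq : t • m.toFun (x s) (x s) + -((2:ℝ) • m.toFun (x s) (y s))
            + t⁻¹ • m.toFun (y s) (y s)
          = (t • m.toFun (x s) (x s) + t⁻¹ • m.toFun (y s) (y s))
            - (2:ℝ) • m.toFun (x s) (y s) := by abel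
      rw [heq] at h0
      exact sub_nonneg.mp h0
    have hdown : ∀ s, -((2:ℝ) • m.toFun (x s) (y s))
        ≤ t • m.toFun (x s) (x s) + t⁻¹ • m.toFun (y s) (y s) := by
      intro s
      have h0 := m.sq_nonneg (r • x s + r⁻¹ • y s)
      rw [expand r hr.ne' (x s) (y s), hrr, hrri] at h0
      have heq : t • m.toFun (x s) (x s) + (2:ℝ) • m.toFun (x s) (y s)
            + t⁻¹ • m.toFun (y s) (y s)
          = (t • m.toFun (x s) (x s) + t⁻¹ • m.toFun (y s) (y s))
            - -((2:ℝ) • m.toFun (x s) (y s)) := by abel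
      rw [heq] at h0
      exact sub_nonneg.mp h0
    have hi1 : Integrable (fun s => t • m.toFun (x s) (x s)) μ := hxx.smul t
    have hi2 : Integrable (fun s => t⁻¹ • m.toFun (y s) (y s)) μ := hyy.smul t⁻¹
    have h2xy : Integrable (fun s => (2:ℝ) • m.toFun (x s) (y s)) μ := hxy.smul (2:ℝ)
    have hgint : Integrable (fun s => t • m.toFun (x s) (x s)
        + t⁻¹ • m.toFun (y s) (y s)) μ := hi1.add hi2
    have hgval : ∫ s, (t • m.toFun (x s) (x s) + t⁻¹ • m.toFun (y s) (y s)) ∂μ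
        = t • A + t⁻¹ • Bv := by
      rw [integral_add hi1 hi2, integral_smul, integral_smul]
    have h1 : (2:ℝ) • I ≤ t • A + t⁻¹ • Bv := by
      have := my_integral_mono h2xy hgint hup
      rwa [integral_smul, hgval] at this
    have h2 : -((2:ℝ) • I) ≤ t • A + t⁻¹ • Bv := by
      have hneg : Integrable (fun s => -((2:ℝ) • m.toFun (x s) (y s))) μ := h2xy.neg
      have := my_integral_mono hneg hgint hdown
      rwa [integral_neg, integral_smul, hgval] at this
    have hRHS0 : 0 ≤ t • A + t⁻¹ • Bv :=
      add_nonneg (my_smul_nonneg ht.le hA0) (my_smul_nonneg (inv_nonneg.2 ht.le) hB0)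
    have habs : |(2:ℝ) • I| ≤ |t • A + t⁻¹ • Bv| := by
      rw [abs_of_nonneg hRHS0]
      exact abs_le'.2 ⟨h1, h2⟩
    have hnorm : ‖(2:ℝ) • I‖ ≤ ‖t • A + t⁻¹ • Bv‖ := HasSolidNorm.solid habs
    calc 2 * ‖I‖ = ‖(2:ℝ) • I‖ := by rw [norm_smul]; simp
    _ ≤ ‖t • A + t⁻¹ • Bv‖ := hnorm
    _ ≤ ‖t • A‖ + ‖t⁻¹ • Bv‖ := norm_add_le _ _
    _ = t * ‖A‖ + t⁻¹ * ‖Bv‖ := by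
        rw [norm_smul, norm_smul, Real.norm_eq_abs, Real.norm_eq_abs,
          abs_of_pos ht, abs_of_pos (inv_pos.2 ht)]
  exact my_key (norm_nonneg A) (norm_nonneg Bv) (norm_nonneg I) main
end

section
/- Let (S, Σ, μ) be a σ-finite measure space and define ‖x‖_ℳ := ‖∫_S x² dμ‖_Y^{1/2} for x ∈ L²(S; X). Then ‖·‖_ℳ is a norm on L²(S; X): it is finite, absolutely homogeneous, satisfies the triangle inequality ‖x + y‖_ℳ ≤ ‖x‖_ℳ + ‖y‖_ℳ, and ‖x‖_ℳ = 0 if and only if x = 0 μ-almost everywhere; moreover ‖x‖_ℳ ≤ ‖x‖_{L²(S;X)} for all x ∈ L²(S; X). -/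
open MeasureTheory Filter Topology ENNReal

/-- The candidate `ℳ`-norm `‖x‖_ℳ = ‖∫_S x² dμ‖_Y ^ (1/2)`. -/
noncomputable def mNorm {S X Y : Type*} [MeasurableSpace S]
    [NormedAddCommGroup X] [NormedSpace ℝ X]
    [NormedAddCommGroup Y] [NormedSpace ℝ Y] [PartialOrder Y]
    (m : Multiplication X Y) (μ : Measure S) (x : S → X) : ℝ :=
  Real.sqrt ‖∫ s, m.toFun (x s) (x s) ∂μ‖

section LatticeAux

variable {Y : Type*} [NormedAddCommGroup Y] [Lattice Y] [IsOrderedAddMonoid Y] [HasSolidNorm Y]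
    [NormedSpace ℝ Y]

omit [NormedSpace ℝ Y] in
lemma auxHalfNonneg {a : Y} (h : 0 ≤ a + a) : 0 ≤ a := by
  have hna : -a ≤ a := by
    have : 0 ≤ a - -a := by rwa [sub_neg_eq_add]
    exact sub_nonneg.mp this
  have h1 : a⁻ ≤ a⁺ := by
    rw [negPart_def, posPart_def]
    exact sup_le_sup_right hna 0
  have h2 : a⁻ ≤ 0 := by
    calc a⁻ ≤ a⁺ ⊓ a⁻ := le_inf h1 le_rfl
    _ = 0 := posPart_inf_negPart_eq_zero a
  have h3 : a⁻ = 0 := le_antisymm h2 (negPart_nonneg a)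
  exact negPart_eq_zero.mp h3

omit [NormedSpace ℝ Y] in
lemma auxIsClosedCone : IsClosed {y : Y | 0 ≤ y} := by
  have : {y : Y | 0 ≤ y} = (fun y : Y => y ⊓ 0) ⁻¹' {0} := by
    ext y
    simp only [Set.mem_setOf_eq, Set.mem_preimage, Set.mem_singleton_iff]
    rw [inf_eq_right]
  rw [this]
  exact IsClosed.preimage (continuous_id.inf continuous_const) isClosed_singleton

lemma auxSmulNonneg {t : ℝ} (ht : 0 ≤ t) {z : Y} (hz : 0 ≤ z) : 0 ≤ t • z := by
  have hdy : ∀ (m k : ℕ), 0 ≤ ((k : ℝ) / 2 ^ m) • z := by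
    intro m
    induction m with
    | zero =>
      intro k
      simpa [Nat.cast_smul_eq_nsmul] using nsmul_nonneg hz k
    | succ m ih =>
      intro k
      apply auxHalfNonneg
      rw [← add_smul]
      have he : (k : ℝ) / 2 ^ (m + 1) + (k : ℝ) / 2 ^ (m + 1) = (k : ℝ) / 2 ^ m := by
        ring
      rw [he]
      exact ih k
  have hlim : Tendsto (fun m : ℕ => ((⌊t * 2 ^ m⌋₊ : ℝ) / 2 ^ m)) atTop (𝓝 t) := by
    have h1 := tendsto_nat_floor_mul_div_atTop (R := ℝ) ht
    have h2 : Tendsto (fun m : ℕ => ((2 : ℝ) ^ m)) atTop atTop :=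
      tendsto_pow_atTop_atTop_of_one_lt one_lt_two
    exact h1.comp h2
  have hlim2 : Tendsto (fun m : ℕ => ((⌊t * 2 ^ m⌋₊ : ℝ) / 2 ^ m) • z) atTop (𝓝 (t • z)) :=
    hlim.smul_const z
  exact auxIsClosedCone.mem_of_tendsto hlim2 (Eventually.of_forall fun m => hdy m _)

lemma auxIntegralNonneg {S : Type*} [MeasurableSpace S] {μ : Measure S} [CompleteSpace Y]
    {f : S → Y} (hf : Integrable f μ) (h : 0 ≤ᵐ[μ] f) : 0 ≤ ∫ s, f s ∂μ := by
  by_contra hneg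
  have hconv : Convex ℝ {y : Y | 0 ≤ y} := fun a ha b hb p q hp hq _ =>
    add_nonneg (auxSmulNonneg hp ha) (auxSmulNonneg hq hb)
  obtain ⟨φ, u, hsu, hu⟩ := geometric_hahn_banach_closed_point hconv auxIsClosedCone hneg
  clear hneg
  have hu0 : 0 < u := by simpa using hsu 0 le_rfl
  have hφ : ∀ y : Y, 0 ≤ y → φ y ≤ 0 := by
    intro y hy
    by_contra hpos
    push_neg at hpos
    obtain ⟨n, hn⟩ := exists_nat_gt (u / φ y)
    have h1 := hsu (n • y) (nsmul_nonneg hy n)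
    rw [map_nsmul] at h1
    have h2 : (n : ℝ) * φ y < u := by simpa [nsmul_eq_mul] using h1
    have h3 := (div_lt_iff₀ hpos).mp hn
    linarith
  have key : φ (∫ s, f s ∂μ) ≤ 0 := by
    rw [← ContinuousLinearMap.integral_comp_comm φ hf]
    exact integral_nonpos_of_ae (h.mono fun s hs => hφ _ hs)
  linarith

end LatticeAux

section MulAux

variable {S X Y : Type*} [MeasurableSpace S]
    [NormedAddCommGroup X] [NormedSpace ℝ X] [CompleteSpace X]
    [NormedAddCommGroup Y] [Lattice Y] [IsOrderedAddMonoid Y] [HasSolidNorm Y]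
    [NormedSpace ℝ Y] [CompleteSpace Y]
    (m : Multiplication X Y) {μ : Measure S}

lemma Multiplication.add_right' (a b c : X) :
    m.toFun a (b + c) = m.toFun a b + m.toFun a c := by
  rw [m.symm, m.add_left, m.symm b, m.symm c]

lemma Multiplication.smul_right' (t : ℝ) (a b : X) :
    m.toFun a (t • b) = t • m.toFun a b := by
  rw [m.symm, m.smul_left, m.symm]

lemma mulContinuous : Continuous fun p : X × X => m.toFun p.1 p.2 := by
  let L : X →L[ℝ] X →L[ℝ] Y := LinearMap.mkContinuous₂
    (LinearMap.mk₂ ℝ m.toFun m.add_left m.smul_left m.add_right' m.smul_right') 1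
    (fun x y => by simpa using m.norm_mul_le x y)
  have h : (fun p : X × X => m.toFun p.1 p.2) = fun p : X × X => L p.1 p.2 := rfl
  rw [h]
  exact L.isBoundedBilinearMap.continuous

lemma mulAESM {x y : S → X} (hx : AEStronglyMeasurable x μ)
    (hy : AEStronglyMeasurable y μ) :
    AEStronglyMeasurable (fun s => m.toFun (x s) (y s)) μ :=
  (mulContinuous m).comp_aestronglyMeasurable (hx.prodMk hy)

lemma auxIntNormSq {x : S → X} (hx : MemLp x 2 μ) :
    Integrable (fun s => ‖x s‖ ^ 2) μ := by
  have h := hx.integrable_norm_rpow two_ne_zero ENNReal.ofNat_ne_top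
  have h2 : ENNReal.toReal 2 = (2:ℝ) := by norm_num
  rw [h2] at h
  simpa [Real.rpow_two] using h

lemma mulIntegrable {x y : S → X} (hx : MemLp x 2 μ) (hy : MemLp y 2 μ) :
    Integrable (fun s => m.toFun (x s) (y s)) μ := by
  have hx2 := auxIntNormSq hx
  have hy2 := auxIntNormSq hy
  refine ((hx2.add hy2).div_const 2).mono'
    (mulAESM m hx.aestronglyMeasurable hy.aestronglyMeasurable) ?_
  filter_upwards with s
  have h1 := m.norm_mul_le (x s) (y s)
  have h2 := sq_nonneg (‖x s‖ - ‖y s‖)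
  have h3 : ‖m.toFun (x s) (y s)‖ ≤ (‖x s‖ ^ 2 + ‖y s‖ ^ 2) / 2 := by nlinarith
  simpa using h3

lemma mulSqExpand (u d : ℝ) (a b : X) :
    m.toFun (u • a + d • b) (u • a + d • b)
      = (u * u) • m.toFun a a + ((u * d) • m.toFun a b
          + ((u * d) • m.toFun a b + (d * d) • m.toFun b b)) := by
  rw [m.add_left, m.add_right', m.add_right']
  simp only [m.smul_left, m.smul_right']
  rw [m.symm b a]
  module

lemma integralSqExpand {x y : S → X} (hx : MemLp x 2 μ) (hy : MemLp y 2 μ) (u d : ℝ) :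
    ∫ s, m.toFun (u • x s + d • y s) (u • x s + d • y s) ∂μ
      = (u * u) • (∫ s, m.toFun (x s) (x s) ∂μ)
        + ((u * d) • (∫ s, m.toFun (x s) (y s) ∂μ)
          + ((u * d) • (∫ s, m.toFun (x s) (y s) ∂μ)
            + (d * d) • (∫ s, m.toFun (y s) (y s) ∂μ))) := by
  have hIA := mulIntegrable m hx hx
  have hIC := mulIntegrable m hx hy
  have hIB := mulIntegrable m hy hy
  have hIA' : Integrable (fun s => (u * u) • m.toFun (x s) (x s)) μ := hIA.smul (u * u)
  have hIC' : Integrable (fun s => (u * d) • m.toFun (x s) (y s)) μ := hIC.smul (u * d)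
  have hIB' : Integrable (fun s => (d * d) • m.toFun (y s) (y s)) μ := hIB.smul (d * d)
  have hg2 : Integrable (fun s => (u * d) • m.toFun (x s) (y s)
      + (d * d) • m.toFun (y s) (y s)) μ := hIC'.add hIB'
  have hg1 : Integrable (fun s => (u * d) • m.toFun (x s) (y s)
      + ((u * d) • m.toFun (x s) (y s) + (d * d) • m.toFun (y s) (y s))) μ := hIC'.add hg2
  simp_rw [mulSqExpand m u d]
  rw [integral_add hIA' hg1, integral_add hIC' hg2, integral_add hIC' hIB',
    integral_smul, integral_smul, integral_smul]

lemma mulCS {x y : S → X} (hx : MemLp x 2 μ) (hy : MemLp y 2 μ) :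
    ‖∫ s, m.toFun (x s) (y s) ∂μ‖
      ≤ Real.sqrt ‖∫ s, m.toFun (x s) (x s) ∂μ‖ * Real.sqrt ‖∫ s, m.toFun (y s) (y s) ∂μ‖ := by
  set A := ∫ s, m.toFun (x s) (x s) ∂μ with hA
  set B := ∫ s, m.toFun (y s) (y s) ∂μ with hB
  set C := ∫ s, m.toFun (x s) (y s) ∂μ with hC
  have key : ∀ t : ℝ, 0 < t → 2 * ‖C‖ ≤ t * ‖A‖ + t⁻¹ * ‖B‖ := by
    intro t ht
    set u := Real.sqrt t with hu
    have hu0 : 0 < u := Real.sqrt_pos.2 ht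
    have huu : u * u = t := Real.mul_self_sqrt ht.le
    have hnn : ∀ d : ℝ, 0 ≤ (u * u) • A + ((u * d) • C + ((u * d) • C + (d * d) • B)) := by
      intro d
      rw [← integralSqExpand m hx hy u d]
      have hz : MemLp (fun s => u • x s + d • y s) 2 μ := (hx.const_smul u).add (hy.const_smul d)
      exact auxIntegralNonneg (mulIntegrable m hz hz)
        (Eventually.of_forall fun s => m.sq_nonneg _)
    have h1 := hnn u⁻¹
    have h2 := hnn (-u⁻¹)
    have e1 : u * u⁻¹ = 1 := mul_inv_cancel₀ hu0.ne'
    have e2 : u * -u⁻¹ = -1 := by rw [mul_neg, e1]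
    have e3 : u⁻¹ * u⁻¹ = t⁻¹ := by rw [← mul_inv, huu]
    have e4 : -u⁻¹ * -u⁻¹ = t⁻¹ := by rw [neg_mul_neg, e3]
    rw [huu, e1, e3, one_smul] at h1
    rw [huu, e2, e4, neg_one_smul] at h2
    set D := t • A + t⁻¹ • B with hD
    have hle : C + C ≤ D := by
      rw [← sub_nonneg]
      calc (0 : Y) ≤ t • A + (-C + (-C + t⁻¹ • B)) := h2
      _ = D - (C + C) := by rw [hD]; abel
    have hge : -(C + C) ≤ D := by
      rw [← sub_nonneg, sub_neg_eq_add]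
      calc (0 : Y) ≤ t • A + (C + (C + t⁻¹ • B)) := h1
      _ = D + (C + C) := by rw [hD]; abel
    have habs : |C + C| ≤ D := abs_le'.2 ⟨hle, hge⟩
    have hDnn : 0 ≤ D := le_trans (abs_nonneg _) habs
    have hnorm : ‖C + C‖ ≤ ‖D‖ :=
      norm_le_norm_of_abs_le_abs (by rwa [abs_of_nonneg hDnn])
    have h2C : ‖C + C‖ = 2 * ‖C‖ := by
      rw [← two_smul ℝ C, norm_smul]; norm_num
    have hDle : ‖D‖ ≤ t * ‖A‖ + t⁻¹ * ‖B‖ := by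
      refine (norm_add_le _ _).trans ?_
      rw [norm_smul, norm_smul, Real.norm_eq_abs, Real.norm_eq_abs,
        abs_of_pos ht, abs_of_pos (inv_pos.2 ht)]
    linarith
  set a := Real.sqrt ‖A‖ with ha
  set b := Real.sqrt ‖B‖ with hb
  have haA : ‖A‖ = a ^ 2 := (Real.sq_sqrt (norm_nonneg _)).symm
  have hbB : ‖B‖ = b ^ 2 := (Real.sq_sqrt (norm_nonneg _)).symm
  have ha0 : 0 ≤ a := Real.sqrt_nonneg _
  have hb0 : 0 ≤ b := Real.sqrt_nonneg _
  have main : 2 * ‖C‖ ≤ 2 * (a * b) := by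
    refine le_of_forall_pos_le_add fun ε hε => ?_
    set δ := ε / (2 * (a + b + 1)) with hδ
    have hδ0 : 0 < δ := by positivity
    have hk := key ((b + δ) / (a + δ)) (by positivity)
    have hinv : ((b + δ) / (a + δ))⁻¹ = (a + δ) / (b + δ) := by rw [inv_div]
    rw [hinv] at hk
    have f1 : (b + δ) / (a + δ) * ‖A‖ ≤ (b + δ) * a := by
      rw [haA, div_mul_eq_mul_div, div_le_iff₀ (by positivity)]
      nlinarith [mul_nonneg (mul_nonneg (add_nonneg hb0 hδ0.le) ha0) hδ0.le]
    have f2 : (a + δ) / (b + δ) * ‖B‖ ≤ (a + δ) * b := by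
      rw [hbB, div_mul_eq_mul_div, div_le_iff₀ (by positivity)]
      nlinarith [mul_nonneg (mul_nonneg (add_nonneg ha0 hδ0.le) hb0) hδ0.le]
    have f3 : δ * (2 * (a + b + 1)) = ε := by
      rw [hδ]; field_simp
    nlinarith [mul_nonneg hδ0.le ha0, mul_nonneg hδ0.le hb0]
  linarith

end MulAux

theorem stmt11 {S X Y : Type*} [MeasurableSpace S]
    [NormedAddCommGroup X] [NormedSpace ℝ X] [CompleteSpace X]
    [NormedAddCommGroup Y] [Lattice Y] [IsOrderedAddMonoid Y] [HasSolidNorm Y]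
    [NormedSpace ℝ Y] [CompleteSpace Y]
    (m : Multiplication X Y)
    (μ : Measure S) [SigmaFinite μ] :
    -- absolute homogeneity
    (∀ (c : ℝ) (x : S → X), MemLp x 2 μ →
      mNorm m μ (fun s => c • x s) = |c| * mNorm m μ x) ∧
    -- triangle inequality
    (∀ x y : S → X, MemLp x 2 μ → MemLp y 2 μ →
      mNorm m μ (fun s => x s + y s) ≤ mNorm m μ x + mNorm m μ y) ∧
    -- definiteness (up to μ-a.e. equality)
    (∀ x : S → X, MemLp x 2 μ → (mNorm m μ x = 0 ↔ x =ᵐ[μ] 0)) ∧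
    -- domination by the L² norm (in particular finiteness)
    (∀ x : S → X, MemLp x 2 μ → mNorm m μ x ≤ (eLpNorm x 2 μ).toReal) := by
  refine ⟨?_, ?_, ?_, ?_⟩
  · -- homogeneity
    intro c x _
    unfold mNorm
    have hpt : ∀ s, m.toFun (c • x s) (c • x s) = (c * c) • m.toFun (x s) (x s) := by
      intro s
      rw [m.smul_left, m.smul_right' , smul_smul]
    simp_rw [hpt]
    rw [integral_smul, norm_smul, Real.norm_eq_abs, abs_mul,
      Real.sqrt_mul (mul_nonneg (abs_nonneg c) (abs_nonneg c)),
      Real.sqrt_mul_self (abs_nonneg c)]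
  · -- triangle
    intro x y hx hy
    unfold mNorm
    have hexp := integralSqExpand m hx hy 1 1
    simp only [one_smul, one_mul] at hexp
    set A := ∫ s, m.toFun (x s) (x s) ∂μ with hA
    set B := ∫ s, m.toFun (y s) (y s) ∂μ with hB
    set C := ∫ s, m.toFun (x s) (y s) ∂μ with hC
    set a := Real.sqrt ‖A‖ with ha
    set b := Real.sqrt ‖B‖ with hb
    have haA : ‖A‖ = a ^ 2 := (Real.sq_sqrt (norm_nonneg _)).symm
    have hbB : ‖B‖ = b ^ 2 := (Real.sq_sqrt (norm_nonneg _)).symm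
    have ha0 : 0 ≤ a := Real.sqrt_nonneg _
    have hb0 : 0 ≤ b := Real.sqrt_nonneg _
    have hCS : ‖C‖ ≤ a * b := mulCS m hx hy
    rw [hexp]
    have step1 : ‖A + (C + (C + B))‖ ≤ (a + b) ^ 2 := by
      calc ‖A + (C + (C + B))‖ ≤ ‖A‖ + (‖C‖ + (‖C‖ + ‖B‖)) := by
            refine (norm_add_le _ _).trans ?_
            gcongr
            refine (norm_add_le _ _).trans ?_
            gcongr
            exact norm_add_le _ _
      _ ≤ (a + b) ^ 2 := by nlinarith
    calc Real.sqrt ‖A + (C + (C + B))‖ ≤ Real.sqrt ((a + b) ^ 2) := Real.sqrt_le_sqrt step1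
    _ = a + b := Real.sqrt_sq (add_nonneg ha0 hb0)
  · -- definiteness
    intro x hx
    have hIA := mulIntegrable m hx hx
    constructor
    · intro h0
      have hA0 : ∫ s, m.toFun (x s) (x s) ∂μ = 0 := by
        have h1 : ‖∫ s, m.toFun (x s) (x s) ∂μ‖ = 0 := by
          unfold mNorm at h0
          exact (Real.sqrt_eq_zero (norm_nonneg _)).mp h0
        exact norm_eq_zero.mp h1
      have hset : ∀ A : Set S, MeasurableSet A → μ A < ⊤ →
          ∫ s in A, m.toFun (x s) (x s) ∂μ = 0 := by
        intro A hA _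
        have h1 : 0 ≤ ∫ s in A, m.toFun (x s) (x s) ∂μ :=
          auxIntegralNonneg hIA.integrableOn
            (ae_restrict_of_ae (Eventually.of_forall fun s => m.sq_nonneg _))
        have h2 : 0 ≤ ∫ s in Aᶜ, m.toFun (x s) (x s) ∂μ :=
          auxIntegralNonneg hIA.integrableOn
            (ae_restrict_of_ae (Eventually.of_forall fun s => m.sq_nonneg _))
        have h3 := integral_add_compl hA hIA
        have h4 : ∫ s in A, m.toFun (x s) (x s) ∂μ ≤ 0 := by
          calc ∫ s in A, m.toFun (x s) (x s) ∂μ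
              ≤ (∫ s in A, m.toFun (x s) (x s) ∂μ) + ∫ s in Aᶜ, m.toFun (x s) (x s) ∂μ :=
                le_add_of_nonneg_right h2
          _ = ∫ s, m.toFun (x s) (x s) ∂μ := h3
          _ = 0 := hA0
        exact le_antisymm h4 h1
      have hsq0 : (fun s => m.toFun (x s) (x s)) =ᵐ[μ] 0 :=
        ae_eq_zero_of_forall_setIntegral_eq_of_sigmaFinite
          (fun A _ _ => hIA.integrableOn) hset
      exact hsq0.mono fun s hs => (m.sq_eq_zero_iff (x s)).mp hs
    · intro h
      have hsq : (fun s => m.toFun (x s) (x s)) =ᵐ[μ] 0 := by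
        refine h.mono fun s hs => ?_
        simp only [Pi.zero_apply] at hs ⊢
        rw [hs]
        exact (m.sq_eq_zero_iff 0).mpr rfl
      unfold mNorm
      rw [integral_congr_ae hsq]
      simp
  · -- domination
    intro x hx
    have hIA := mulIntegrable m hx hx
    have hx2 := auxIntNormSq hx
    have h1 : ‖∫ s, m.toFun (x s) (x s) ∂μ‖ ≤ ∫ s, ‖x s‖ ^ 2 ∂μ := by
      refine (norm_integral_le_integral_norm _).trans ?_
      refine integral_mono hIA.norm hx2 fun s => ?_
      simpa [pow_two] using m.norm_mul_le (x s) (x s)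
    have h2 : (eLpNorm x 2 μ).toReal = Real.sqrt (∫ s, ‖x s‖ ^ 2 ∂μ) := by
      rw [hx.eLpNorm_eq_integral_rpow_norm two_ne_zero ENNReal.ofNat_ne_top]
      rw [ENNReal.toReal_ofReal (by positivity)]
      have h22 : ENNReal.toReal 2 = (2:ℝ) := by norm_num
      rw [h22]
      simp_rw [Real.rpow_two]
      rw [Real.sqrt_eq_rpow]
      norm_num
    show Real.sqrt ‖∫ s, m.toFun (x s) (x s) ∂μ‖ ≤ _
    rw [h2]
    exact Real.sqrt_le_sqrt h1
end

section
/- Let (S, Σ, μ) be a finite measure space and x ∈ L²(S; X). Let A : X → V be a bounded linear operator and B : Y → W a bounded linear operator such that (A v)² ⪯ B(v²) in W for all v ∈ X. Then ‖(∫_S A x dμ)²‖_W ≤ μ(S) · ‖B‖_{L(Y;W)} · ‖∫_S x² dμ‖_Y. -/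
open MeasureTheory

section LatticeAux

variable {G : Type*} [NormedAddCommGroup G] [Lattice G] [IsOrderedAddMonoid G] [HasSolidNorm G]

lemma aux_inf_add_eq_zero {x y z : G} (hx : 0 ≤ x) (hy : 0 ≤ y) (hz : 0 ≤ z)
    (hxy : x ⊓ y = 0) (hxz : x ⊓ z = 0) : x ⊓ (y + z) = 0 := by
  refine le_antisymm ?_ (le_inf hx (add_nonneg hy hz))
  have key : (x ⊓ y) + (x ⊓ z) = ((x + x) ⊓ (x + z)) ⊓ ((y + x) ⊓ (y + z)) := by
    rw [inf_add x y (x ⊓ z), add_inf x z x, add_inf x z y]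
  have h1 : x ⊓ (y + z) ≤ ((x + x) ⊓ (x + z)) ⊓ ((y + x) ⊓ (y + z)) := by
    refine le_inf (le_inf ?_ ?_) (le_inf ?_ inf_le_right)
    · exact inf_le_left.trans (le_add_of_nonneg_right hx)
    · exact inf_le_left.trans (le_add_of_nonneg_right hz)
    · exact inf_le_left.trans (le_add_of_nonneg_left hy)
  calc x ⊓ (y + z) ≤ ((x + x) ⊓ (x + z)) ⊓ ((y + x) ⊓ (y + z)) := h1
    _ = (x ⊓ y) + (x ⊓ z) := key.symm
    _ = 0 := by rw [hxy, hxz, add_zero]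

lemma aux_inf_nsmul_eq_zero {x y : G} (hx : 0 ≤ x) (hy : 0 ≤ y)
    (hxy : x ⊓ y = 0) : ∀ n : ℕ, x ⊓ (n • y) = 0 := by
  intro n
  induction n with
  | zero => simpa using inf_eq_right.2 hx
  | succ k ih =>
      rw [succ_nsmul]
      exact aux_inf_add_eq_zero hx (nsmul_nonneg hy k) hy ih hxy

lemma aux_nonneg_of_nsmul_nonneg {n : ℕ} (hn : n ≠ 0) {a : G} (h : 0 ≤ n • a) : 0 ≤ a := by
  have hpm : a⁺ - a⁻ = a := posPart_sub_negPart a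
  have hsub : n • a⁻ ≤ n • a⁺ := by
    have : (0 : G) ≤ n • a⁺ - n • a⁻ := by
      rw [← nsmul_sub, hpm]; exact h
    exact sub_nonneg.mp this
  obtain ⟨k, rfl⟩ := Nat.exists_eq_succ_of_ne_zero hn
  have hle : a⁻ ≤ (k + 1) • a⁺ := by
    calc a⁻ ≤ (k + 1) • a⁻ := by
          rw [succ_nsmul]
          exact le_add_of_nonneg_left (nsmul_nonneg (negPart_nonneg a) k)
      _ ≤ (k + 1) • a⁺ := hsub
  have hdisj : a⁻ ⊓ ((k + 1) • a⁺) = 0 := by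
    refine aux_inf_nsmul_eq_zero (negPart_nonneg a) (posPart_nonneg a) ?_ (k + 1)
    rw [inf_comm]; exact posPart_inf_negPart_eq_zero a
  have hneg : a⁻ = 0 := by
    have := inf_eq_left.mpr hle
    rw [hdisj] at this; exact this.symm
  rw [← hpm, hneg, sub_zero]
  exact posPart_nonneg a

lemma aux_smul_nonneg [NormedSpace ℝ G] {c : ℝ} (hc : 0 ≤ c) {v : G} (hv : 0 ≤ v) :
    0 ≤ c • v := by
  have hrat : ∀ q : ℚ, 0 ≤ q → 0 ≤ (q : ℝ) • v := by
    intro q hq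
    refine aux_nonneg_of_nsmul_nonneg (n := q.den) q.den_pos.ne' ?_
    have hcast : (q.den : ℕ) • ((q : ℝ) • v) = q.num • v := by
      rw [← Nat.cast_smul_eq_nsmul ℝ, smul_smul, ← Int.cast_smul_eq_zsmul ℝ]
      congr 1
      rw [Rat.cast_def]
      field_simp
    rw [hcast]
    exact zsmul_nonneg hv (Rat.num_nonneg.mpr hq)
  have hq : ∀ n : ℕ, ∃ q : ℚ, c < (q : ℝ) ∧ (q : ℝ) < c + 1 / (n + 1) := by
    intro n
    exact exists_rat_btwn (lt_add_of_pos_right c (by positivity))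
  choose q hq1 hq2 using hq
  have hlim : Filter.Tendsto (fun n : ℕ => ((q n : ℝ))) Filter.atTop (nhds c) := by
    refine tendsto_of_tendsto_of_tendsto_of_le_of_le tendsto_const_nhds ?_
      (fun n => (hq1 n).le) (fun n => (hq2 n).le)
    simpa using tendsto_const_nhds.add (tendsto_one_div_add_atTop_nhds_zero_nat (𝕜 := ℝ))
  have hsm : Filter.Tendsto (fun n : ℕ => (q n : ℝ) • v) Filter.atTop (nhds (c • v)) :=
    hlim.smul_const v
  refine le_of_tendsto_of_tendsto' tendsto_const_nhds hsm (fun n => ?_)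
  refine hrat (q n) ?_
  have : (0 : ℝ) ≤ (q n : ℝ) := hc.trans (hq1 n).le
  exact_mod_cast this

lemma aux_integral_nonneg [NormedSpace ℝ G] [CompleteSpace G]
    {S : Type*} [MeasurableSpace S] {μ : Measure S} {f : S → G}
    (hf : ∀ s, 0 ≤ f s) : 0 ≤ ∫ s, f s ∂μ := by
  rw [integral_eq_setToFun]
  refine setToFun_nonneg (dominatedFinMeasAdditive_weightedSMul μ)
    (fun s _ _ x hx => ?_) (Filter.Eventually.of_forall hf)
  rw [weightedSMul_apply]
  exact aux_smul_nonneg ENNReal.toReal_nonneg hx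

lemma aux_integral_mono [NormedSpace ℝ G] [CompleteSpace G]
    {S : Type*} [MeasurableSpace S] {μ : Measure S} {f g : S → G}
    (hf : Integrable f μ) (hg : Integrable g μ) (h : ∀ s, f s ≤ g s) :
    ∫ s, f s ∂μ ≤ ∫ s, g s ∂μ := by
  have := aux_integral_nonneg (μ := μ) (f := fun s => g s - f s)
    (fun s => sub_nonneg.mpr (h s))
  rwa [integral_sub hg hf, sub_nonneg] at this

end LatticeAux

section MultAux

variable {Z E : Type*} [NormedAddCommGroup Z] [NormedSpace ℝ Z]
  [NormedAddCommGroup E] [NormedSpace ℝ E] [PartialOrder E]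

/-- The continuous bilinear map associated to a `Multiplication`. -/
noncomputable def Multiplication.clm (m : Multiplication Z E) : Z →L[ℝ] Z →L[ℝ] E :=
  LinearMap.mkContinuous₂
    (LinearMap.mk₂ ℝ m.toFun m.add_left m.smul_left
      (fun a b c => by rw [m.symm a (b + c), m.add_left, m.symm b a, m.symm c a])
      (fun t a b => by rw [m.symm a (t • b), m.smul_left, m.symm b a]))
    1 (fun a b => by simpa using m.norm_mul_le a b)

@[simp] lemma Multiplication.clm_apply (m : Multiplication Z E) (a b : Z) :
    m.clm a b = m.toFun a b := rfl

lemma Multiplication.sq_integrable (m : Multiplication Z E)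
    {S : Type*} [MeasurableSpace S] {μ : Measure S} {g : S → Z} (hg : MemLp g 2 μ) :
    Integrable (fun s => m.toFun (g s) (g s)) μ := by
  have hcont : Continuous fun v : Z => m.clm v v :=
    m.clm.continuous₂.comp (continuous_id.prodMk continuous_id)
  have hmeas : AEStronglyMeasurable (fun s => m.toFun (g s) (g s)) μ :=
    hcont.comp_aestronglyMeasurable hg.aestronglyMeasurable
  have hbound : Integrable (fun s => ‖g s‖ ^ 2) μ := hg.norm.integrable_sq
  refine Integrable.mono' hbound hmeas (Filter.Eventually.of_forall fun s => ?_)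
  calc ‖m.toFun (g s) (g s)‖ ≤ ‖g s‖ * ‖g s‖ := m.norm_mul_le _ _
    _ = ‖g s‖ ^ 2 := by ring

end MultAux

theorem stmt13 {S X Y V W : Type*} [MeasurableSpace S]
    [NormedAddCommGroup X] [NormedSpace ℝ X] [CompleteSpace X]
    [NormedAddCommGroup Y] [Lattice Y] [IsOrderedAddMonoid Y] [HasSolidNorm Y] [NormedSpace ℝ Y] [CompleteSpace Y]
    [NormedAddCommGroup V] [NormedSpace ℝ V] [CompleteSpace V]
    [NormedAddCommGroup W] [Lattice W] [IsOrderedAddMonoid W] [HasSolidNorm W] [NormedSpace ℝ W] [CompleteSpace W]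
    (mX : Multiplication X Y) (mV : Multiplication V W)
    (μ : Measure S) [IsFiniteMeasure μ]
    (x : S → X) (hx : MemLp x 2 μ)
    (A : X →L[ℝ] V) (B : Y →L[ℝ] W)
    (hAB : ∀ v : X, mV.toFun (A v) (A v) ≤ B (mX.toFun v v)) :
    ‖mV.toFun (∫ s, A (x s) ∂μ) (∫ s, A (x s) ∂μ)‖ ≤
      (μ Set.univ).toReal * ‖B‖ * ‖∫ s, mX.toFun (x s) (x s) ∂μ‖ := by
  classical
  set MV := mV.clm with hMVdef
  set f : S → V := fun s => A (x s) with hfdef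
  have hf2 : MemLp f 2 μ := A.comp_memLp' hx
  have hf1 : Integrable f μ := hf2.integrable one_le_two
  set c := (μ Set.univ).toReal with hc
  have hc0 : 0 ≤ c := ENNReal.toReal_nonneg
  set I : V := ∫ s, f s ∂μ with hI
  have hsqf : Integrable (fun s => mV.toFun (f s) (f s)) μ := mV.sq_integrable hf2
  have hsqx : Integrable (fun s => mX.toFun (x s) (x s)) μ := mX.sq_integrable hx
  set J : W := ∫ s, mV.toFun (f s) (f s) ∂μ with hJ
  set K : Y := ∫ s, mX.toFun (x s) (x s) ∂μ with hK
  -- cross-term integrabilities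
  have hcross1 : ∀ v : V, Integrable (fun s => mV.toFun v (f s)) μ :=
    fun v => (MV v).integrable_comp hf1
  have hcross2 : ∀ v : V, Integrable (fun s => mV.toFun (f s) v) μ :=
    fun v => (MV.flip v).integrable_comp hf1
  -- integral exchange lemmas
  have e5 : ∀ v : V, (∫ s, mV.toFun v (f s) ∂μ) = mV.toFun v I :=
    fun v => (MV v).integral_comp_comm hf1
  have e6 : ∀ v : V, (∫ s, mV.toFun (f s) v ∂μ) = mV.toFun I v :=
    fun v => (MV.flip v).integral_comp_comm hf1
  -- expansion of the square of a difference
  have hexp : ∀ a b : V, mV.toFun (a - b) (a - b) =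
      mV.toFun a a - mV.toFun a b - (mV.toFun b a - mV.toFun b b) := by
    intro a b
    have : MV (a - b) (a - b) = MV a a - MV a b - (MV b a - MV b b) := by
      rw [map_sub MV a b, ContinuousLinearMap.sub_apply, map_sub, map_sub]
    exact this
  -- inner integral computation
  have hinner : ∀ t : S, (∫ s, mV.toFun (f s - f t) (f s - f t) ∂μ) =
      J - mV.toFun I (f t) - (mV.toFun (f t) I - c • mV.toFun (f t) (f t)) := by
    intro t
    have h2 : Integrable (fun s => mV.toFun (f s) (f t)) μ := hcross2 (f t)
    have h3 : Integrable (fun s => mV.toFun (f t) (f s)) μ := hcross1 (f t)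
    have h4 : Integrable (fun _ : S => mV.toFun (f t) (f t)) μ := integrable_const _
    calc (∫ s, mV.toFun (f s - f t) (f s - f t) ∂μ)
        = ∫ s, (mV.toFun (f s) (f s) - mV.toFun (f s) (f t)
            - (mV.toFun (f t) (f s) - mV.toFun (f t) (f t))) ∂μ := by
          exact integral_congr_ae (Filter.Eventually.of_forall fun s => hexp (f s) (f t))
      _ = (∫ s, (mV.toFun (f s) (f s) - mV.toFun (f s) (f t)) ∂μ)
            - ∫ s, (mV.toFun (f t) (f s) - mV.toFun (f t) (f t)) ∂μ :=
          integral_sub (hsqf.sub h2) (h3.sub h4)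
      _ = ((∫ s, mV.toFun (f s) (f s) ∂μ) - ∫ s, mV.toFun (f s) (f t) ∂μ)
            - ((∫ s, mV.toFun (f t) (f s) ∂μ) - ∫ _, mV.toFun (f t) (f t) ∂μ) := by
          rw [integral_sub hsqf h2, integral_sub h3 h4]
      _ = J - mV.toFun I (f t) - (mV.toFun (f t) I - c • mV.toFun (f t) (f t)) := by
          rw [e6 (f t), e5 (f t), integral_const, measureReal_def]
  -- positivity of the double integral
  have hDpos : (0 : W) ≤ ∫ t, (J - mV.toFun I (f t)
      - (mV.toFun (f t) I - c • mV.toFun (f t) (f t))) ∂μ := by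
    have h0 : (0 : W) ≤ ∫ t, (∫ s, mV.toFun (f s - f t) (f s - f t) ∂μ) ∂μ :=
      aux_integral_nonneg (fun t => aux_integral_nonneg (fun s => mV.sq_nonneg _))
    calc (0 : W) ≤ ∫ t, (∫ s, mV.toFun (f s - f t) (f s - f t) ∂μ) ∂μ := h0
      _ = _ := by
        refine integral_congr_ae (Filter.Eventually.of_forall fun t => ?_)
        exact hinner t
  -- evaluate the outer integral
  have hconstJ : Integrable (fun _ : S => J) μ := integrable_const _
  have h5 : Integrable (fun t => mV.toFun I (f t)) μ := hcross1 I
  have h6 : Integrable (fun t => mV.toFun (f t) I) μ := hcross2 I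
  have h7 : Integrable (fun t => c • mV.toFun (f t) (f t)) μ := hsqf.smul c
  have hDval : (∫ t, (J - mV.toFun I (f t)
      - (mV.toFun (f t) I - c • mV.toFun (f t) (f t))) ∂μ)
      = c • J - mV.toFun I I - (mV.toFun I I - c • J) := by
    calc (∫ t, (J - mV.toFun I (f t)
          - (mV.toFun (f t) I - c • mV.toFun (f t) (f t))) ∂μ)
        = (∫ t, (J - mV.toFun I (f t)) ∂μ)
            - ∫ t, (mV.toFun (f t) I - c • mV.toFun (f t) (f t)) ∂μ :=
          integral_sub (hconstJ.sub h5) (h6.sub h7)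
      _ = ((∫ _, J ∂μ) - ∫ t, mV.toFun I (f t) ∂μ)
            - ((∫ t, mV.toFun (f t) I ∂μ) - ∫ t, c • mV.toFun (f t) (f t) ∂μ) := by
          rw [integral_sub hconstJ h5, integral_sub h6 h7]
      _ = c • J - mV.toFun I I - (mV.toFun I I - c • J) := by
          rw [e5 I, e6 I, integral_const, integral_smul, measureReal_def]
  rw [hDval] at hDpos
  have hkey : mV.toFun I I ≤ c • J := by
    have h2smul : (0 : W) ≤ 2 • (c • J - mV.toFun I I) := by
      have : c • J - mV.toFun I I - (mV.toFun I I - c • J)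
          = 2 • (c • J - mV.toFun I I) := by abel
      rwa [this] at hDpos
    have := aux_nonneg_of_nsmul_nonneg (n := 2) two_ne_zero h2smul
    exact sub_nonneg.mp this
  -- compare with B applied to the square integral of x
  have hBK : Integrable (fun s => B (mX.toFun (x s) (x s))) μ := B.integrable_comp hsqx
  have hJle : J ≤ B K := by
    have hmono := aux_integral_mono hsqf hBK (fun s => hAB (x s))
    rwa [B.integral_comp_comm hsqx] at hmono
  have hcJ : c • J ≤ c • B K := by
    have := aux_smul_nonneg hc0 (sub_nonneg.mpr hJle)
    rw [smul_sub] at this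
    exact sub_nonneg.mp this
  have hfinal : mV.toFun I I ≤ c • B K := hkey.trans hcJ
  have hnn : 0 ≤ mV.toFun I I := mV.sq_nonneg I
  have hnorm : ‖mV.toFun I I‖ ≤ ‖c • B K‖ := by
    apply HasSolidNorm.solid
    rw [abs_of_nonneg hnn, abs_of_nonneg (hnn.trans hfinal)]
    exact hfinal
  have hgoal : ‖mV.toFun I I‖ ≤ c * ‖B‖ * ‖K‖ := by
    calc ‖mV.toFun I I‖ ≤ ‖c • B K‖ := hnorm
      _ = |c| * ‖B K‖ := by rw [norm_smul, Real.norm_eq_abs]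
      _ = c * ‖B K‖ := by rw [abs_of_nonneg hc0]
      _ ≤ c * (‖B‖ * ‖K‖) := mul_le_mul_of_nonneg_left (B.le_opNorm K) hc0
      _ = c * ‖B‖ * ‖K‖ := by ring
  exact hgoal
end
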